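/- arXiv:2308.03211 — 7 statements merged into one kernel-verified Lean document; each statement's English description precedes it below -/
import Mathlib

section
/- The ℝ[t]-module of triples (f0, f1, f2) ∈ ℝ[t]³ with t² dividing f0 - f1 and (t-1)² dividing f1 - f2 is generated by (1,1,1), (t²,0,0), and (0,0,(t-1)²). -/
/-!
A triple `f` with `p ∣ f.1 - f.2.1` and `q ∣ f.2.1 - f.2.2`, say `f.1 - f.2.1 = p * a` and
`f.2.1 - f.2.2 = q * b`, is `f.2.1 • (1, 1, 1) + a • (p, 0, 0) - b • (0, 0, q)`; conversely each
generator satisfies both divisibility conditions and these are closed under `R`-linear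
combinations.
-/

open Polynomial

section Spline

variable {R : Type*} [CommRing R]

/-- Splines on three consecutive cells whose interior breakpoints impose the smoothness
conditions `p` and `q`; for `C¹` splines with breakpoints `0` and `1`, `p = t²` and `q = (t - 1)²`. -/
def splineSubmodule (p q : R) : Submodule R (R × R × R) where
  carrier := {f | p ∣ f.1 - f.2.1 ∧ q ∣ f.2.1 - f.2.2}
  add_mem' := by
    rintro f g ⟨hf₁, hf₂⟩ ⟨hg₁, hg₂⟩
    constructor
    · simpa only [Prod.fst_add, Prod.snd_add, add_sub_add_comm] using dvd_add hf₁ hg₁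
    · simpa only [Prod.fst_add, Prod.snd_add, add_sub_add_comm] using dvd_add hf₂ hg₂
  zero_mem' := by simp
  smul_mem' := by
    rintro c f ⟨hf₁, hf₂⟩
    constructor
    · simpa only [Prod.smul_fst, Prod.smul_snd, smul_eq_mul, mul_sub] using hf₁.mul_left c
    · simpa only [Prod.smul_fst, Prod.smul_snd, smul_eq_mul, mul_sub] using hf₂.mul_left c

theorem mem_splineSubmodule {p q : R} {f : R × R × R} :
    f ∈ splineSubmodule p q ↔ p ∣ f.1 - f.2.1 ∧ q ∣ f.2.1 - f.2.2 :=
  Iff.rfl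

theorem span_eq_splineSubmodule (p q : R) :
    Submodule.span R {((1 : R), (1 : R), (1 : R)), (p, 0, 0), (0, 0, q)} = splineSubmodule p q := by
  apply le_antisymm
  · rw [Submodule.span_le]
    rintro g (rfl | rfl | rfl) <;> simp [mem_splineSubmodule]
  · rintro f ⟨⟨a, ha⟩, ⟨b, hb⟩⟩
    have hf : f = f.2.1 • ((1 : R), (1 : R), (1 : R)) + a • (p, 0, 0) - b • (0, 0, q) := by
      ext
      · simp only [Prod.fst_sub, Prod.fst_add, Prod.smul_fst, smul_eq_mul]
        linear_combination ha
      · simp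
      · simp only [Prod.snd_sub, Prod.snd_add, Prod.smul_snd, smul_eq_mul]
        linear_combination -hb
    rw [hf]
    refine Submodule.sub_mem _ (Submodule.add_mem _ ?_ ?_) ?_ <;>
      exact Submodule.smul_mem _ _ (Submodule.subset_span (by simp))

end Spline

theorem spline_C1_module_generators (f : Polynomial ℝ × Polynomial ℝ × Polynomial ℝ) :
    f ∈ Submodule.span (Polynomial ℝ)
        ({((1 : Polynomial ℝ), (1 : Polynomial ℝ), (1 : Polynomial ℝ)),
          (X ^ 2, 0, 0), (0, 0, (X - 1) ^ 2)} :
          Set (Polynomial ℝ × Polynomial ℝ × Polynomial ℝ)) ↔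
      X ^ 2 ∣ f.1 - f.2.1 ∧ (X - 1) ^ 2 ∣ f.2.1 - f.2.2 := by
  rw [span_eq_splineSubmodule]
  exact mem_splineSubmodule
end

section
/- In ℝ[x,y,z], the ideal ⟨x(x-y), xz, z(z-y+1)⟩ equals the intersection of the three ideals ⟨x-y, z⟩, ⟨x, z⟩, and ⟨x, z-y+1⟩. -/
/-!
The ideals `⟨x - y, z⟩` and `⟨x, z - y + 1⟩` are prime: they are the kernels of the idempotent
substitutions `(x, y, z) ↦ (y, y, 0)` and `(x, y, z) ↦ (0, y, y - 1)`, whose images lie in the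
domain `ℝ[x,y,z]`. For a prime `P`, `a ∉ P` and `J ≤ P`, the modular law gives
`P ⊓ (J ⊔ ⟨a⟩) = J ⊔ P·a`. Hence `⟨x - y, z⟩ ⊓ ⟨z, x⟩ = ⟨z⟩ ⊔ ⟨x - y, z⟩·x`, and intersecting
with `⟨x, z - y + 1⟩ ⊇ ⟨x - y, z⟩·x` leaves `⟨x - y, z⟩·x ⊔ ⟨x, z - y + 1⟩·z`, which is
`⟨x(x - y), xz, z(z - y + 1)⟩`.
-/

open MvPolynomial

namespace MvPolynomial

variable {R σ : Type*} [CommRing R]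

theorem sub_bind₁_mem_span_X_sub (v : σ → MvPolynomial σ R) (p : MvPolynomial σ R) :
    p - bind₁ v p ∈ Ideal.span (Set.range fun i => X i - v i) := by
  induction p using MvPolynomial.induction_on with
  | C a => simp
  | add p q hp hq =>
    rw [map_add, add_sub_add_comm]
    exact Ideal.add_mem _ hp hq
  | mul_X p i hp =>
    have h : p * X i - bind₁ v (p * X i) =
        (p - bind₁ v p) * X i + bind₁ v p * (X i - v i) := by
      rw [map_mul, bind₁_X_right]; ring
    rw [h]
    exact Ideal.add_mem _ (Ideal.mul_mem_right _ _ hp)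
      (Ideal.mul_mem_left _ _ (Ideal.subset_span ⟨i, rfl⟩))

theorem ker_bind₁_eq_span_X_sub {v : σ → MvPolynomial σ R}
    (hv : ∀ i, bind₁ v (v i) = v i) :
    RingHom.ker (bind₁ v) = Ideal.span (Set.range fun i => X i - v i) := by
  refine le_antisymm (fun p hp => ?_) (Ideal.span_le.mpr ?_)
  · simpa [RingHom.mem_ker.mp hp] using sub_bind₁_mem_span_X_sub v p
  · rintro _ ⟨i, rfl⟩
    simp [hv]

theorem span_X_sub_X_X_eq_ker :
    (Ideal.span {X 0 - X 1, X 2} : Ideal (MvPolynomial (Fin 3) R)) =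
      RingHom.ker (bind₁ (![X 1, X 1, 0] : Fin 3 → MvPolynomial (Fin 3) R)) := by
  rw [ker_bind₁_eq_span_X_sub (by simp [Fin.forall_fin_succ]), ← Ideal.span_insert_zero]
  congr 1; ext; simp [Fin.exists_fin_succ, eq_comm]; tauto

theorem span_X_X_sub_X_add_one_eq_ker :
    (Ideal.span {X 0, X 2 - X 1 + 1} : Ideal (MvPolynomial (Fin 3) R)) =
      RingHom.ker (bind₁ (![0, X 1, X 1 - 1] : Fin 3 → MvPolynomial (Fin 3) R)) := by
  rw [ker_bind₁_eq_span_X_sub (by simp [Fin.forall_fin_succ]), ← Ideal.span_insert_zero]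
  congr 1; ext; simp [Fin.exists_fin_succ, eq_comm, sub_add]; tauto

theorem X_notMem_span_X_sub_X_X [Nontrivial R] :
    (X 0 : MvPolynomial (Fin 3) R) ∉ Ideal.span {X 0 - X 1, X 2} := by
  simp [span_X_sub_X_X_eq_ker, X_ne_zero]

theorem X_notMem_span_X_X_sub_X_add_one [Nontrivial R] :
    (X 2 : MvPolynomial (Fin 3) R) ∉ Ideal.span {X 0, X 2 - X 1 + 1} := by
  rw [span_X_X_sub_X_add_one_eq_ker, RingHom.mem_ker]
  intro h
  simpa using congrArg (eval 0) h

theorem isPrime_span_X_sub_X_X [IsDomain R] :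
    (Ideal.span {X 0 - X 1, X 2} : Ideal (MvPolynomial (Fin 3) R)).IsPrime :=
  span_X_sub_X_X_eq_ker (R := R) ▸ RingHom.ker_isPrime _

theorem isPrime_span_X_X_sub_X_add_one [IsDomain R] :
    (Ideal.span {X 0, X 2 - X 1 + 1} : Ideal (MvPolynomial (Fin 3) R)).IsPrime :=
  span_X_X_sub_X_add_one_eq_ker (R := R) ▸ RingHom.ker_isPrime _

end MvPolynomial

namespace Ideal.IsPrime

variable {R : Type*} [CommRing R] {P : Ideal R} {a : R}

theorem inf_span_singleton_eq_mul (hP : P.IsPrime) (ha : a ∉ P) :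
    P ⊓ span {a} = P * span {a} := by
  refine le_antisymm (fun r ⟨hrP, hra⟩ => ?_) mul_le_inf
  obtain ⟨c, rfl⟩ := mem_span_singleton'.mp hra
  exact mul_mem_mul ((hP.mem_or_mem hrP).resolve_right ha) (mem_span_singleton_self a)

theorem inf_sup_span_singleton_eq {J : Ideal R} (hP : P.IsPrime) (ha : a ∉ P) (hJ : J ≤ P) :
    P ⊓ (J ⊔ span {a}) = J ⊔ P * span {a} := by
  rw [inf_comm, sup_inf_assoc_of_le _ hJ, inf_comm, hP.inf_span_singleton_eq_mul ha]

end Ideal.IsPrime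

theorem spline_scheme_C0_primary_decomposition :
    let x : MvPolynomial (Fin 3) ℝ := X 0
    let y : MvPolynomial (Fin 3) ℝ := X 1
    let z : MvPolynomial (Fin 3) ℝ := X 2
    Ideal.span {x * (x - y), x * z, z * (z - y + 1)} =
      Ideal.span {x - y, z} ⊓ Ideal.span {x, z} ⊓ Ideal.span {x, z - y + 1} := by
  intro x y z
  set P₁ := Ideal.span {x - y, z}
  set P₃ := Ideal.span {x, z - y + 1}
  have hzP₁ : Ideal.span {z} ≤ P₁ :=
    (Ideal.span_singleton_le_iff_mem _).mpr (Ideal.subset_span (by simp))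
  have hxP₃ : P₁ * Ideal.span {x} ≤ P₃ := Ideal.mul_le_right.trans
    ((Ideal.span_singleton_le_iff_mem _).mpr (Ideal.subset_span (by simp)))
  symm
  calc P₁ ⊓ Ideal.span {x, z} ⊓ P₃ = P₃ ⊓ (P₁ ⊓ (Ideal.span {z} ⊔ Ideal.span {x})) := by
        rw [Ideal.span_insert x, sup_comm, inf_comm]
    _ = P₃ ⊓ (P₁ * Ideal.span {x} ⊔ Ideal.span {z}) := by
        rw [isPrime_span_X_sub_X_X.inf_sup_span_singleton_eq X_notMem_span_X_sub_X_X hzP₁,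
          sup_comm]
    _ = P₁ * Ideal.span {x} ⊔ P₃ * Ideal.span {z} :=
        isPrime_span_X_X_sub_X_add_one.inf_sup_span_singleton_eq
          X_notMem_span_X_X_sub_X_add_one hxP₃
    _ = Ideal.span {x * (x - y), x * z, z * (z - y + 1)} := by
        rw [Ideal.span_mul_span', Ideal.span_mul_span', ← Ideal.span_union]
        congr 1; ext; simp [Set.mul_singleton, Set.image_insert_eq, mul_comm]; tauto
end

section
/- In ℝ[x,y,z], the ideal ⟨x(x-y²), xz, z(z-(y-1)²)⟩ equals the intersection of the three ideals ⟨x-y², z⟩, ⟨x, z⟩, and ⟨x, z-(y-1)²⟩. -/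
/-!
Write `P = ⟨x - y², z⟩` and `Q = ⟨x, z - (y - 1)²⟩`. Both are prime: they are the kernels of
the substitutions `ℝ[x,y,z] → ℝ[t]` given by `(t², t, 0)` and `(0, t, (t - 1)²)`. The
left-hand ideal is `x P + z Q`. Conversely, if `f = a x + b z` lies in `P` and in `Q`, then
`a x ∈ P` and `b z ∈ Q`; since `x ∉ P` and `z ∉ Q`, primality gives `a ∈ P` and `b ∈ Q`.
-/

open MvPolynomial

theorem Ideal.inf_span_pair_inf_eq_add {A : Type*} [CommRing A] {P Q : Ideal A} [P.IsPrime]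
    [Q.IsPrime] {u v : A} (huP : u ∉ P) (hvP : v ∈ P) (huQ : u ∈ Q) (hvQ : v ∉ Q) :
    P ⊓ Ideal.span {u, v} ⊓ Q = Ideal.span {u} * P + Ideal.span {v} * Q := by
  apply le_antisymm
  · rintro f ⟨⟨hfP, hf⟩, hfQ⟩
    obtain ⟨a, b, rfl⟩ := Ideal.mem_span_pair.mp hf
    have haP : a ∈ P := by
      have : a * u ∈ P := by simpa using P.sub_mem hfP (P.mul_mem_left b hvP)
      exact (‹P.IsPrime›.mem_or_mem this).resolve_right huP
    have hbQ : b ∈ Q := by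
      have : b * v ∈ Q := by simpa using Q.sub_mem hfQ (Q.mul_mem_left a huQ)
      exact (‹Q.IsPrime›.mem_or_mem this).resolve_right hvQ
    rw [mul_comm a, mul_comm b]
    exact Submodule.add_mem_sup (Ideal.mul_mem_mul (Ideal.mem_span_singleton_self u) haP)
      (Ideal.mul_mem_mul (Ideal.mem_span_singleton_self v) hbQ)
  · refine sup_le (le_inf (le_inf Ideal.mul_le_right ?_) ?_)
      (le_inf (le_inf ?_ ?_) Ideal.mul_le_right)
    · exact Ideal.mul_le_left.trans (Ideal.span_mono (by simp))
    · exact Ideal.mul_le_left.trans ((Ideal.span_singleton_le_iff_mem _).mpr huQ)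
    · exact Ideal.mul_le_left.trans ((Ideal.span_singleton_le_iff_mem _).mpr hvP)
    · exact Ideal.mul_le_left.trans (Ideal.span_mono (by simp))

theorem MvPolynomial.sub_aeval_mem {R σ : Type*} [CommRing R] {I : Ideal (MvPolynomial σ R)}
    {g : σ → MvPolynomial σ R} (hg : ∀ i, X i - g i ∈ I) (p : MvPolynomial σ R) :
    p - aeval g p ∈ I := by
  rw [← Ideal.Quotient.eq_zero_iff_mem, map_sub, sub_eq_zero]
  suffices h : (Ideal.Quotient.mkₐ R I).comp (aeval g) = Ideal.Quotient.mkₐ R I from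
    (DFunLike.congr_fun h p).symm
  refine MvPolynomial.algHom_ext fun i => ?_
  simpa [Ideal.Quotient.eq] using sub_mem_comm_iff.mp (hg i)

/- Substituting `t ↦ X j` back is a section of `aeval q`, and it is the identity modulo
the span. -/
theorem MvPolynomial.ker_aeval_eq_span_X_sub {R σ : Type*} [CommRing R] (q : σ → Polynomial R)
    (j : σ) (hj : q j = Polynomial.X) :
    RingHom.ker (aeval q) =
      Ideal.span (Set.range fun i => X i - Polynomial.aeval (X j : MvPolynomial σ R) (q i)) := by
  apply le_antisymm
  · intro p hp
    have hsub := sub_aeval_mem (I := Ideal.span (Set.range fun i =>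
      X i - Polynomial.aeval (X j : MvPolynomial σ R) (q i)))
      (fun i => Ideal.subset_span ⟨i, rfl⟩) p
    rwa [← comp_aeval_apply, RingHom.mem_ker.mp hp, map_zero, sub_zero] at hsub
  · rw [Ideal.span_le]
    rintro _ ⟨i, rfl⟩
    simp [← Polynomial.aeval_algHom_apply, hj]

theorem MvPolynomial.ker_aeval_fin_three {R : Type*} [CommRing R] (p q : Polynomial R) :
    RingHom.ker (aeval ![p, Polynomial.X, q] : MvPolynomial (Fin 3) R →ₐ[R] Polynomial R) =
      Ideal.span {X 0 - Polynomial.aeval (X 1) p, X 2 - Polynomial.aeval (X 1) q} := by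
  rw [ker_aeval_eq_span_X_sub ![p, Polynomial.X, q] 1 rfl]
  nth_rewrite 2 [← Ideal.span_insert_zero]
  congr 1
  ext f
  simp [Fin.exists_fin_succ, eq_comm, or_left_comm]

theorem spline_scheme_C1_primary_decomposition :
    let x : MvPolynomial (Fin 3) ℝ := X 0
    let y : MvPolynomial (Fin 3) ℝ := X 1
    let z : MvPolynomial (Fin 3) ℝ := X 2
    Ideal.span {x * (x - y ^ 2), x * z, z * (z - (y - 1) ^ 2)} =
      Ideal.span {x - y ^ 2, z} ⊓ Ideal.span {x, z} ⊓ Ideal.span {x, z - (y - 1) ^ 2} := by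
  intro x y z
  have hP : Ideal.span {x - y ^ 2, z} = RingHom.ker (aeval ![Polynomial.X ^ 2, Polynomial.X, 0] :
      MvPolynomial (Fin 3) ℝ →ₐ[ℝ] Polynomial ℝ) := by
    simp [ker_aeval_fin_three, x, y, z]
  have hQ : Ideal.span {x, z - (y - 1) ^ 2} =
      RingHom.ker (aeval ![0, Polynomial.X, (Polynomial.X - 1) ^ 2] :
        MvPolynomial (Fin 3) ℝ →ₐ[ℝ] Polynomial ℝ) := by
    simp [ker_aeval_fin_three, x, y, z]
  have : (Ideal.span {x - y ^ 2, z}).IsPrime := hP ▸ RingHom.ker_isPrime _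
  have : (Ideal.span {x, z - (y - 1) ^ 2}).IsPrime := hQ ▸ RingHom.ker_isPrime _
  have hxP : x ∉ Ideal.span {x - y ^ 2, z} := by simp [hP, x]
  have hzQ : z ∉ Ideal.span {x, z - (y - 1) ^ 2} := by
    simpa [hQ, z] using Polynomial.X_sub_C_ne_zero (1 : ℝ)
  rw [Ideal.inf_span_pair_inf_eq_add hxP (Ideal.subset_span (by simp))
    (Ideal.subset_span (by simp)) hzQ, Ideal.span_mul_span', Ideal.span_mul_span',
    Ideal.add_eq_sup, ← Ideal.span_union]
  congr 1
  ext f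
  simp [mul_comm z x, eq_comm, or_assoc]
end

section
/- The ℝ-algebra homomorphism ℝ[x,y,z] → ℝ[t]³ sending x ↦ (t,0,0), y ↦ (t,t,t), z ↦ (0,0,t-1) has image equal to the ring S⁰(Δ) = {(f0,f1,f2) : f0(0)=f1(0), f1(1)=f2(1)} and kernel equal to the ideal ⟨x(x-y), xz, z(z-y+1)⟩, so S⁰(Δ) ≅ ℝ[x,y,z]/⟨x(x-y), xz, z(z-y+1)⟩. -/
open Polynomial

/-!
Modulo the relations, `x² ≡ xy`, `xz ≡ 0` and `z² ≡ z(y - 1)`, so every polynomial reduces to a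
normal form `a(y) + x b(y) + z c(y)`, which is sent to `(a + t b, a, a + (t - 1) c)`. Since `t` and
`t - 1` are monic, hence non-zero-divisors, this image vanishes only for `a = b = c = 0`, which
gives the kernel. The image consists of those triples with `f₀ - f₁` divisible by `t` and
`f₂ - f₁` divisible by `t - 1`, i.e. of the C⁰ splines.
-/

namespace SplineC0

variable {R : Type*} [CommRing R]

local notation "𝕩" => MvPolynomial.X (0 : Fin 3)
local notation "𝕪" => MvPolynomial.X (1 : Fin 3)
local notation "𝕫" => MvPolynomial.X (2 : Fin 3)

noncomputable def splineMap : MvPolynomial (Fin 3) R →ₐ[R] R[X] × R[X] × R[X] :=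
  MvPolynomial.aeval ![(X, 0, 0), (X, X, X), (0, 0, X - 1)]

noncomputable def relations : Ideal (MvPolynomial (Fin 3) R) :=
  Ideal.span {𝕩 * (𝕩 - 𝕪), 𝕩 * 𝕫, 𝕫 * (𝕫 - 𝕪 + 1)}

noncomputable def normalForm (a b c : R[X]) : MvPolynomial (Fin 3) R :=
  aeval 𝕪 a + 𝕩 * aeval 𝕪 b + 𝕫 * aeval 𝕪 c

lemma combination_mem_relations (u v w : MvPolynomial (Fin 3) R) :
    u * (𝕩 * (𝕩 - 𝕪)) + v * (𝕩 * 𝕫) + w * (𝕫 * (𝕫 - 𝕪 + 1)) ∈ relations :=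
  Submodule.mem_span_triple.mpr ⟨u, v, w, rfl⟩

@[simp] lemma splineMap_X (i : Fin 3) :
    splineMap (MvPolynomial.X i : MvPolynomial (Fin 3) R) =
      ![(X, 0, 0), (X, X, X), (0, 0, X - 1)] i :=
  MvPolynomial.aeval_X _ _

lemma splineMap_normalForm (a b c : R[X]) :
    splineMap (normalForm a b c) = (a + X * b, a, a + (X - 1) * c) := by
  simp [normalForm, ← aeval_algHom_apply, aeval_prod_apply]

lemma relations_le_ker : relations ≤ RingHom.ker (splineMap (R := R)) := by
  rw [relations, Ideal.span_le]
  rintro g (rfl | rfl | rfl) <;> simp [Prod.ext_iff]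

lemma splineMap_eq_of_sub_mem_relations {p q : MvPolynomial (Fin 3) R}
    (h : p - q ∈ relations) : splineMap p = splineMap q :=
  sub_eq_zero.mp <| by simpa using relations_le_ker h

lemma exists_normalForm_sub_mul_X_mem_relations (a b c : R[X]) (i : Fin 3) :
    ∃ a' b' c', normalForm a b c * MvPolynomial.X i - normalForm a' b' c' ∈ relations := by
  match i with
  | 0 =>
    refine ⟨0, a + X * b, 0, ?_⟩
    convert combination_mem_relations (aeval 𝕪 b) (aeval 𝕪 c) 0 using 1
    simp only [normalForm, map_zero, map_add, map_mul, aeval_X]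
    ring
  | 1 =>
    refine ⟨a * X, b * X, c * X, ?_⟩
    convert (relations (R := R)).zero_mem using 1
    simp only [normalForm, map_mul, aeval_X]
    ring
  | 2 =>
    refine ⟨0, 0, a + (X - 1) * c, ?_⟩
    convert combination_mem_relations 0 (aeval 𝕪 b) (aeval 𝕪 c) using 1
    simp only [normalForm, map_zero, map_add, map_sub, map_one, map_mul, aeval_X]
    ring

lemma exists_sub_normalForm_mem_relations (p : MvPolynomial (Fin 3) R) :
    ∃ a b c, p - normalForm a b c ∈ relations := by
  induction p using MvPolynomial.induction_on with
  | C r =>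
    exact ⟨C r, 0, 0, by simp [normalForm]⟩
  | add p q hp hq =>
    obtain ⟨a, b, c, hp⟩ := hp
    obtain ⟨a', b', c', hq⟩ := hq
    refine ⟨a + a', b + b', c + c', ?_⟩
    convert add_mem hp hq using 1
    simp only [normalForm, map_add]
    ring
  | mul_X p i hp =>
    obtain ⟨a, b, c, hp⟩ := hp
    obtain ⟨a', b', c', hi⟩ := exists_normalForm_sub_mul_X_mem_relations a b c i
    refine ⟨a', b', c', ?_⟩
    convert add_mem (relations.mul_mem_right (MvPolynomial.X i) hp) hi using 1
    ring

lemma normalForm_eq_zero_of_splineMap_eq_zero {a b c : R[X]}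
    (h : splineMap (normalForm a b c) = 0) : normalForm a b c = 0 := by
  simp only [splineMap_normalForm, Prod.mk_eq_zero] at h
  obtain ⟨hb, rfl, hc⟩ := h
  have hb : b = 0 := (monic_X.mul_right_eq_zero_iff).mp (by simpa using hb)
  have hc : c = 0 := by
    rw [← C_1] at hc
    exact ((monic_X_sub_C 1).mul_right_eq_zero_iff).mp (by simpa using hc)
  simp [normalForm, hb, hc]

theorem ker_splineMap : RingHom.ker (splineMap (R := R)) = relations := by
  refine le_antisymm (fun p hp => ?_) relations_le_ker
  obtain ⟨a, b, c, hmem⟩ := exists_sub_normalForm_mem_relations p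
  have hN : splineMap (normalForm a b c) = 0 :=
    (splineMap_eq_of_sub_mem_relations hmem).symm.trans hp
  simpa [normalForm_eq_zero_of_splineMap_eq_zero hN] using hmem

theorem range_splineMap : Set.range (splineMap (R := R)) =
    {f | f.1.eval 0 = f.2.1.eval 0 ∧ f.2.1.eval 1 = f.2.2.eval 1} := by
  ext f
  constructor
  · rintro ⟨p, rfl⟩
    obtain ⟨a, b, c, hmem⟩ := exists_sub_normalForm_mem_relations p
    rw [splineMap_eq_of_sub_mem_relations hmem, splineMap_normalForm]
    simp
  · obtain ⟨f₀, f₁, f₂⟩ := f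
    rintro ⟨h₀, h₁⟩
    obtain ⟨b, hb⟩ : X - C 0 ∣ f₀ - f₁ := dvd_iff_isRoot.mpr (by simp [h₀])
    obtain ⟨c, hc⟩ : X - C 1 ∣ f₂ - f₁ := dvd_iff_isRoot.mpr (by simp [h₁])
    rw [map_zero, sub_zero] at hb
    rw [map_one] at hc
    refine ⟨normalForm f₁ b c, ?_⟩
    rw [splineMap_normalForm]
    refine Prod.ext ?_ (Prod.ext rfl ?_)
    · linear_combination -hb
    · linear_combination -hc

end SplineC0

theorem spline_C0_presentation :
    let T : Polynomial ℝ × Polynomial ℝ × Polynomial ℝ := (Polynomial.X, 0, 0)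
    let Y : Polynomial ℝ × Polynomial ℝ × Polynomial ℝ :=
      (Polynomial.X, Polynomial.X, Polynomial.X)
    let Z : Polynomial ℝ × Polynomial ℝ × Polynomial ℝ := (0, 0, Polynomial.X - 1)
    let φ : MvPolynomial (Fin 3) ℝ →ₐ[ℝ] Polynomial ℝ × Polynomial ℝ × Polynomial ℝ :=
      MvPolynomial.aeval ![T, Y, Z]
    Set.range φ = {f | f.1.eval 0 = f.2.1.eval 0 ∧ f.2.1.eval 1 = f.2.2.eval 1} ∧
    RingHom.ker φ.toRingHom =
      Ideal.span {(MvPolynomial.X 0 : MvPolynomial (Fin 3) ℝ) *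
          (MvPolynomial.X 0 - MvPolynomial.X 1),
        MvPolynomial.X 0 * MvPolynomial.X 2,
        MvPolynomial.X 2 * (MvPolynomial.X 2 - MvPolynomial.X 1 + 1)} :=
  ⟨SplineC0.range_splineMap, SplineC0.ker_splineMap⟩
end

section
/- The ℝ-algebra homomorphism ℝ[x,y,z] → ℝ[t]³ sending x ↦ (t²,0,0), y ↦ (t,t,t), z ↦ (0,0,(t-1)²) has kernel ⟨x(x-y²), xz, z(z-(y-1)²)⟩ and image the ring S¹(Δ) of triples (f0,f1,f2) with t² | f0-f1 and (t-1)² | f1-f2. -/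
/-!
Write `x, y, z` for the variables and `u = t², v = (t - 1)²`. Modulo the ideal,
`x² ≡ x u(y)`, `x z ≡ 0` and `z² ≡ z v(y)`, so every polynomial reduces to the normal form
`g(y) + x a(y) + z c(y)`, which is sent to `(g + u a, g, g + v c)`. These triples are exactly the
splines, and such a triple vanishes only if `g = a = c = 0`, because `u` and `v` are
non-zero-divisors; so the kernel is no bigger than the ideal.
-/

open Polynomial
open scoped nonZeroDivisors

noncomputable section

variable {R : Type*} [CommRing R] (u v : R[X])

def splineMap : MvPolynomial (Fin 3) R →ₐ[R] R[X] × R[X] × R[X] :=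
  MvPolynomial.aeval ![(u, 0, 0), (X, X, X), (0, 0, v)]

def splineIdeal : Ideal (MvPolynomial (Fin 3) R) :=
  Ideal.span {MvPolynomial.X 0 * (MvPolynomial.X 0 - aeval (MvPolynomial.X 1) u),
    MvPolynomial.X 0 * MvPolynomial.X 2,
    MvPolynomial.X 2 * (MvPolynomial.X 2 - aeval (MvPolynomial.X 1) v)}

def splineNormalForm (g a c : R[X]) : MvPolynomial (Fin 3) R :=
  aeval (MvPolynomial.X 1) g + MvPolynomial.X 0 * aeval (MvPolynomial.X 1) a
    + MvPolynomial.X 2 * aeval (MvPolynomial.X 1) c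

lemma splineMap_aeval_X_one (g : R[X]) :
    splineMap u v (aeval (MvPolynomial.X 1) g) = (g, g, g) := by
  rw [← aeval_algHom_apply]
  simp [splineMap, aeval_prod_apply]

lemma splineMap_splineNormalForm (g a c : R[X]) :
    splineMap u v (splineNormalForm g a c) = (g + u * a, g, g + v * c) := by
  simp only [splineNormalForm, map_add, map_mul, splineMap_aeval_X_one]
  simp [splineMap]

lemma splineIdeal_le_ker : splineIdeal u v ≤ RingHom.ker (splineMap u v).toRingHom := by
  rw [splineIdeal, Ideal.span_le]
  rintro p (rfl | rfl | rfl) <;> simp [splineMap, ← aeval_algHom_apply, aeval_prod_apply]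

section Quotient

variable {u v}

local notation "mk" => Ideal.Quotient.mk (splineIdeal u v)

lemma mk_splineIdeal_relations :
    mk (MvPolynomial.X 0) * (mk (MvPolynomial.X 0) - mk (aeval (MvPolynomial.X 1) u)) = 0 ∧
      mk (MvPolynomial.X 0) * mk (MvPolynomial.X 2) = 0 ∧
      mk (MvPolynomial.X 2) * (mk (MvPolynomial.X 2) - mk (aeval (MvPolynomial.X 1) v)) = 0 := by
  simp only [← map_sub, ← map_mul, Ideal.Quotient.eq_zero_iff_mem]
  refine ⟨?_, ?_, ?_⟩ <;> exact Ideal.subset_span (by simp)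

lemma exists_mk_splineNormalForm_mul_X (g a c : R[X]) (i : Fin 3) :
    ∃ g' a' c',
      mk (splineNormalForm g a c * MvPolynomial.X i) = mk (splineNormalForm g' a' c') := by
  obtain ⟨hx, hxz, hz⟩ := mk_splineIdeal_relations (u := u) (v := v)
  match i with
  | 0 =>
    refine ⟨0, g + u * a, 0, ?_⟩
    simp only [splineNormalForm, map_add, map_mul, map_zero]
    linear_combination
      mk (aeval (MvPolynomial.X 1) a) * hx + mk (aeval (MvPolynomial.X 1) c) * hxz
  | 1 =>
    refine ⟨X * g, X * a, X * c, ?_⟩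
    simp only [splineNormalForm, map_add, map_mul, aeval_X]
    ring
  | 2 =>
    refine ⟨0, 0, g + v * c, ?_⟩
    simp only [splineNormalForm, map_add, map_mul, map_zero]
    linear_combination
      mk (aeval (MvPolynomial.X 1) a) * hxz + mk (aeval (MvPolynomial.X 1) c) * hz

lemma exists_mk_eq_mk_splineNormalForm (p : MvPolynomial (Fin 3) R) :
    ∃ g a c, mk p = mk (splineNormalForm g a c) := by
  induction p using MvPolynomial.induction_on with
  | C r => exact ⟨C r, 0, 0, by simp [splineNormalForm]⟩
  | add p q hp hq =>
    obtain ⟨g, a, c, hp⟩ := hp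
    obtain ⟨g', a', c', hq⟩ := hq
    refine ⟨g + g', a + a', c + c', ?_⟩
    rw [map_add, hp, hq, ← map_add, splineNormalForm, splineNormalForm, splineNormalForm]
    congr 1
    simp only [map_add, mul_add]
    ring
  | mul_X p i hp =>
    obtain ⟨g, a, c, hp⟩ := hp
    rw [map_mul, hp, ← map_mul]
    exact exists_mk_splineNormalForm_mul_X g a c i

lemma splineMap_eq_of_mk_eq {p q : MvPolynomial (Fin 3) R} (h : mk p = mk q) :
    splineMap u v p = splineMap u v q := by
  rw [← sub_eq_zero, ← map_sub]
  exact splineIdeal_le_ker u v (Ideal.Quotient.eq.mp h)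

end Quotient

lemma exists_splineMap_eq (p : MvPolynomial (Fin 3) R) :
    ∃ g a c, splineMap u v p = (g + u * a, g, g + v * c) := by
  obtain ⟨g, a, c, h⟩ := exists_mk_eq_mk_splineNormalForm p
  exact ⟨g, a, c, (splineMap_eq_of_mk_eq h).trans (splineMap_splineNormalForm u v g a c)⟩

theorem range_splineMap :
    Set.range (splineMap u v) = {f | u ∣ f.1 - f.2.1 ∧ v ∣ f.2.1 - f.2.2} := by
  ext ⟨f₀, f₁, f₂⟩
  constructor
  · rintro ⟨p, hp⟩
    obtain ⟨g, a, c, h⟩ := exists_splineMap_eq u v p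
    rw [hp, Prod.mk.injEq, Prod.mk.injEq] at h
    obtain ⟨rfl, rfl, rfl⟩ := h
    exact ⟨⟨a, by ring⟩, ⟨-c, by ring⟩⟩
  · rintro ⟨⟨a, ha⟩, ⟨c, hc⟩⟩
    refine ⟨splineNormalForm f₁ a (-c), ?_⟩
    rw [splineMap_splineNormalForm, Prod.mk.injEq, Prod.mk.injEq]
    exact ⟨by linear_combination -ha, rfl, by linear_combination hc⟩

theorem ker_splineMap (hu : u ∈ R[X]⁰) (hv : v ∈ R[X]⁰) :
    RingHom.ker (splineMap u v).toRingHom = splineIdeal u v := by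
  refine le_antisymm (fun p hp => ?_) (splineIdeal_le_ker u v)
  obtain ⟨g, a, c, h⟩ := exists_mk_eq_mk_splineNormalForm p
  have hzero : (g + u * a, g, g + v * c) = 0 := by
    rw [← splineMap_splineNormalForm, ← splineMap_eq_of_mk_eq h]
    exact hp
  simp only [Prod.mk_eq_zero] at hzero
  obtain ⟨ha, rfl, hc⟩ := hzero
  rw [zero_add, mul_left_mem_nonZeroDivisors_eq_zero_iff hu] at ha
  rw [zero_add, mul_left_mem_nonZeroDivisors_eq_zero_iff hv] at hc
  rw [← Ideal.Quotient.eq_zero_iff_mem, h, ha, hc]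
  simp [splineNormalForm]

end

theorem spline_C1_presentation :
    let T : Polynomial ℝ × Polynomial ℝ × Polynomial ℝ := (Polynomial.X ^ 2, 0, 0)
    let Y : Polynomial ℝ × Polynomial ℝ × Polynomial ℝ :=
      (Polynomial.X, Polynomial.X, Polynomial.X)
    let Z : Polynomial ℝ × Polynomial ℝ × Polynomial ℝ := (0, 0, (Polynomial.X - 1) ^ 2)
    let φ : MvPolynomial (Fin 3) ℝ →ₐ[ℝ] Polynomial ℝ × Polynomial ℝ × Polynomial ℝ :=
      MvPolynomial.aeval ![T, Y, Z]
    Set.range φ =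
      {f | Polynomial.X ^ 2 ∣ f.1 - f.2.1 ∧ (Polynomial.X - 1) ^ 2 ∣ f.2.1 - f.2.2} ∧
    RingHom.ker φ.toRingHom =
      Ideal.span {(MvPolynomial.X 0 : MvPolynomial (Fin 3) ℝ) *
          (MvPolynomial.X 0 - MvPolynomial.X 1 ^ 2),
        MvPolynomial.X 0 * MvPolynomial.X 2,
        MvPolynomial.X 2 * (MvPolynomial.X 2 - (MvPolynomial.X 1 - 1) ^ 2)} := by
  intro T Y Z φ
  have hu : (X ^ 2 : ℝ[X]) ∈ ℝ[X]⁰ := (monic_X.pow 2).mem_nonZeroDivisors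
  have hv : ((X - 1) ^ 2 : ℝ[X]) ∈ ℝ[X]⁰ := ((monic_X_sub_C 1).pow 2).mem_nonZeroDivisors
  refine ⟨range_splineMap _ _, ?_⟩
  rw [show φ = splineMap (X ^ 2) ((X - 1) ^ 2) from rfl, ker_splineMap _ _ hu hv, splineIdeal]
  simp
end

section
/- Let f0, f1, f2 ∈ ℝ[x,y] satisfy f0 - f1 ∈ ⟨y⟩, f0 - f2 ∈ ⟨x⟩, and f1 - f2 ∈ ⟨x - y⟩. Then x·y·(x-y) divides (x-y)·f0 - x·f1 + y·f2; equivalently, f0/(xy) + f1/(-y(x-y)) + f2/(-x(y-x)) is a polynomial. -/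
open MvPolynomial

/-- Writing `f₀ - f₁ = y a` and `f₀ - f₂ = x b`, the numerator is `x y (a - b)`, and the third
condition becomes `x (a - b) = (x - y)(a - c)`, so the prime `x - y` divides `a - b`. -/
theorem mul_mul_sub_dvd_of_spline {R : Type*} [CommRing R] {x y f₀ f₁ f₂ : R}
    (hprime : Prime (x - y)) (hx : ¬x - y ∣ x)
    (h₀₁ : y ∣ f₀ - f₁) (h₀₂ : x ∣ f₀ - f₂) (h₁₂ : x - y ∣ f₁ - f₂) :
    x * y * (x - y) ∣ (x - y) * f₀ - x * f₁ + y * f₂ := by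
  obtain ⟨a, ha⟩ := h₀₁
  obtain ⟨b, hb⟩ := h₀₂
  obtain ⟨c, hc⟩ := h₁₂
  have hab : x - y ∣ a - b := by
    have key : x * (a - b) = (x - y) * (a - c) := by linear_combination -ha + hb - hc
    exact (hprime.dvd_or_dvd ⟨a - c, key⟩).resolve_left hx
  obtain ⟨e, he⟩ := hab
  exact ⟨e, by linear_combination x * ha - y * hb + x * y * he⟩

namespace MvPolynomial

variable {σ R : Type*} [CommRing R]

noncomputable def shearEquiv [DecidableEq σ] (i j : σ) (hij : i ≠ j) :
    MvPolynomial σ R ≃ₐ[R] MvPolynomial σ R :=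
  AlgEquiv.ofAlgHom (aeval (Function.update X i (X i - X j)))
    (aeval (Function.update X i (X i + X j)))
    (by ext k; by_cases hk : k = i <;> simp [hk, Function.update, hij.symm])
    (by ext k; by_cases hk : k = i <;> simp [hk, Function.update, hij.symm])

theorem shearEquiv_X [DecidableEq σ] (i j : σ) (hij : i ≠ j) :
    shearEquiv (R := R) i j hij (X i) = X i - X j := by
  simp [shearEquiv]

theorem X_sub_X_prime [IsDomain R] {i j : σ} (hij : i ≠ j) :
    Prime (X i - X j : MvPolynomial σ R) := by
  classical
  rw [← shearEquiv_X i j hij]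
  exact (MulEquiv.prime_iff (shearEquiv i j hij).toMulEquiv).mpr X_prime

theorem not_X_sub_X_dvd_X [Nontrivial R] (i j : σ) :
    ¬(X i - X j : MvPolynomial σ R) ∣ X i := by
  rintro ⟨g, hg⟩
  simpa using congrArg (eval fun _ => (1 : R)) hg

end MvPolynomial

theorem pushforward_P2_well_defined
    (f0 f1 f2 : MvPolynomial (Fin 2) ℝ) :
    let x : MvPolynomial (Fin 2) ℝ := X 0
    let y : MvPolynomial (Fin 2) ℝ := X 1
    f0 - f1 ∈ Ideal.span {y} →
    f0 - f2 ∈ Ideal.span {x} →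
    f1 - f2 ∈ Ideal.span {x - y} →
    x * y * (x - y) ∣ (x - y) * f0 - x * f1 + y * f2 := by
  intro x y h01 h02 h12
  simp only [Ideal.mem_span_singleton] at h01 h02 h12
  exact mul_mul_sub_dvd_of_spline (X_sub_X_prime zero_ne_one) (not_X_sub_X_dvd_X 0 1)
    h01 h02 h12
end

section
/- Let X be a finite set with |X| = N, covered by subsets X₁,…,Xₘ, and Pd a finite-dimensional space of functions such that each Xᵢ is an interpolation set for Pd (restriction Pd → ℝ^{Xᵢ} is a linear isomorphism). Then the space of overlap splines S = {(p₁,…,pₘ) ∈ Pdᵐ : pᵢ|_{Xᵢ∩Xⱼ} = pⱼ|_{Xᵢ∩Xⱼ} for all i,j} has dimension exactly N. -/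
/-!
Each Xᵢ is an interpolation set, so a spline is determined by the values of its pieces on the
pieces' own sets, and by the overlap condition these values glue to a single function on X = ⋃ Xᵢ.
Conversely, any function on X is interpolated on every Xᵢ separately, and the interpolants agree on
overlaps because they all agree with the function there. Hence splines ≃ ℝ^X.
-/

open Function

section Splines

variable {R α ι : Type*}

section Semiring

variable [Semiring R] (P : Submodule R (α → R))

def Submodule.evalOn (s : Set α) : P →ₗ[R] (s → R) :=
  LinearMap.funLeft R R ((↑) : s → α) ∘ₗ P.subtype

def Submodule.IsInterpolationSet (s : Set α) : Prop :=
  Bijective (P.evalOn s)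

def overlapSplines (X : ι → Set α) : Submodule R (ι → α → R) where
  carrier := {p | (∀ i, p i ∈ P) ∧ ∀ i j, ∀ x, x ∈ X i → x ∈ X j → p i x = p j x}
  add_mem' hp hq :=
    ⟨fun i => P.add_mem (hp.1 i) (hq.1 i), fun i j x hi hj => by
      simp only [Pi.add_apply, hp.2 i j x hi hj, hq.2 i j x hi hj]⟩
  zero_mem' := ⟨fun _ => P.zero_mem, fun _ _ _ _ _ => rfl⟩
  smul_mem' c p hp :=
    ⟨fun i => P.smul_mem c (hp.1 i), fun i j x hi hj => by
      simp only [Pi.smul_apply, hp.2 i j x hi hj]⟩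

namespace overlapSplines

variable {P} {X : ι → Set α} {Y : Set α}

theorem piece_mem (p : overlapSplines P X) (i : ι) : (p : ι → α → R) i ∈ P :=
  p.2.1 i

theorem apply_eq_apply (p : overlapSplines P X) {i j : ι} {x : α} (hi : x ∈ X i)
    (hj : x ∈ X j) : (p : ι → α → R) i x = (p : ι → α → R) j x :=
  p.2.2 i j x hi hj

variable (P) in
/-- Evaluates at `x` the piece of some set containing `x`; which one is immaterial by
`glue_apply`. -/
noncomputable def glue (hcover : ∀ x ∈ Y, ∃ i, x ∈ X i) : overlapSplines P X →ₗ[R] (Y → R) where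
  toFun p x := (p : ι → α → R) (hcover x x.2).choose x
  map_add' _ _ := rfl
  map_smul' _ _ := rfl

theorem glue_apply (hcover : ∀ x ∈ Y, ∃ i, x ∈ X i) (p : overlapSplines P X) (x : Y) {i : ι}
    (hi : (x : α) ∈ X i) : glue P hcover p x = (p : ι → α → R) i x :=
  apply_eq_apply p (hcover x x.2).choose_spec hi

theorem glue_injective (hsub : ∀ i, X i ⊆ Y) (hcover : ∀ x ∈ Y, ∃ i, x ∈ X i)
    (hinj : ∀ i, Injective (P.evalOn (X i))) : Injective (glue P hcover) := by
  intro p q hpq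
  refine Subtype.ext (funext fun i => ?_)
  have hpiece : (⟨_, piece_mem p i⟩ : P) = ⟨_, piece_mem q i⟩ := by
    refine hinj i (funext fun y => ?_)
    have hy := congrFun hpq ⟨y, hsub i y.2⟩
    rwa [glue_apply hcover p _ y.2, glue_apply hcover q _ y.2] at hy
  exact congrArg Subtype.val hpiece

theorem glue_surjective (hsub : ∀ i, X i ⊆ Y) (hcover : ∀ x ∈ Y, ∃ i, x ∈ X i)
    (hsurj : ∀ i, Surjective (P.evalOn (X i))) : Surjective (glue P hcover) := by
  intro f
  choose q hq using fun i => hsurj i fun x : X i => f ⟨x, hsub i x.2⟩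
  have hq_apply (i : ι) (x : α) (hx : x ∈ X i) : (q i : α → R) x = f ⟨x, hsub i hx⟩ :=
    congrFun (hq i) ⟨x, hx⟩
  refine ⟨⟨fun i => q i, fun i => (q i).2, fun i j x hi hj => ?_⟩, funext fun x => ?_⟩
  · exact (hq_apply i x hi).trans (hq_apply j x hj).symm
  · obtain ⟨i, hi⟩ := hcover x x.2
    rw [glue_apply hcover _ x hi]
    exact hq_apply i x hi

noncomputable def glueEquiv (hsub : ∀ i, X i ⊆ Y) (hcover : ∀ x ∈ Y, ∃ i, x ∈ X i)
    (hinterp : ∀ i, P.IsInterpolationSet (X i)) : overlapSplines P X ≃ₗ[R] (Y → R) :=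
  LinearEquiv.ofBijective (glue P hcover)
    ⟨glue_injective hsub hcover fun i => (hinterp i).1,
      glue_surjective hsub hcover fun i => (hinterp i).2⟩

end overlapSplines

end Semiring

theorem finrank_overlapSplines [Ring R] [StrongRankCondition R] {P : Submodule R (α → R)}
    {X : ι → Set α} {Y : Set α} [Finite Y] (hsub : ∀ i, X i ⊆ Y)
    (hcover : ∀ x ∈ Y, ∃ i, x ∈ X i) (hinterp : ∀ i, P.IsInterpolationSet (X i)) :
    Module.finrank R (overlapSplines P X) = Nat.card Y := by
  have := Fintype.ofFinite Y
  rw [(overlapSplines.glueEquiv hsub hcover hinterp).finrank_eq,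
    Module.finrank_fintype_fun_eq_card, Nat.card_eq_fintype_card]

end Splines

theorem overlap_spline_dim_interpolation_general {α : Type*} (m : ℕ) (Xpts : Finset α)
    (Xi : Fin m → Finset α) (hsub : ∀ i, Xi i ⊆ Xpts)
    (hcover : ∀ x ∈ Xpts, ∃ i, x ∈ Xi i)
    (Pd : Submodule ℝ (α → ℝ))
    (hinterp : ∀ i, Function.Bijective
      (fun (p : Pd) => fun (x : (Xi i : Finset α)) => (p : α → ℝ) x))
    (S : Submodule ℝ (Fin m → (α → ℝ)))
    (hS : (S : Set (Fin m → (α → ℝ))) =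
      {p | (∀ i, p i ∈ Pd) ∧
        ∀ i j, ∀ x, x ∈ Xi i → x ∈ Xi j → p i x = p j x}) :
    Module.finrank ℝ S = Xpts.card := by
  obtain rfl : S = overlapSplines Pd fun i => (Xi i : Set α) := SetLike.coe_injective hS
  rw [finrank_overlapSplines (Y := (Xpts : Set α)) (fun i => Finset.coe_subset.mpr (hsub i))
    hcover hinterp, Nat.card_coe_set_eq, Set.ncard_coe_finset]

theorem overlap_spline_dim_interpolation {α : Type*} (m : ℕ) (Xpts : Finset α)
    (Xi : Fin m → Finset α) (hsub : ∀ i, Xi i ⊆ Xpts)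
    (hcover : ∀ x ∈ Xpts, ∃ i, x ∈ Xi i)
    (Pd : Submodule ℝ (α → ℝ)) (hfd : FiniteDimensional ℝ Pd)
    (hinterp : ∀ i, Function.Bijective
      (fun (p : Pd) => fun (x : (Xi i : Finset α)) => (p : α → ℝ) x))
    (S : Submodule ℝ (Fin m → (α → ℝ)))
    (hS : (S : Set (Fin m → (α → ℝ))) =
      {p | (∀ i, p i ∈ Pd) ∧
        ∀ i j, ∀ x, x ∈ Xi i → x ∈ Xi j → p i x = p j x}) :
    Module.finrank ℝ S = Xpts.card :=
  overlap_spline_dim_interpolation_general m Xpts Xi hsub hcover Pd hinterp S hS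
end
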